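/- Let φ and ψ be dual frames for H with upper bounds B_φ, B_ψ, and let m ∈ ℓ^∞ be a real sequence with s = sup_n m_n and i = inf_n m_n. Then the spectrum of M_{m,φ,ψ} is contained in the closed disk centered at (s + i)/2 with radius ((s − i)/2) · B_φ^{1/2} · B_ψ^{1/2}. -/

import Mathlib

/-!
Write `c = (s + i)/2`. By duality, `M - c` is the multiplier with the shifted symbol `m - c`,
which is bounded by `(s - i)/2`. For any multiplier `x = Σ aₙ ⟨ψₙ, f⟩ φₙ`, pairing with `x` and
applying Cauchy–Schwarz in `ℓ²` to the two analysis sequences gives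
`‖x‖² ≤ sup |aₙ| · √B_ψ ‖f‖ · √B_φ ‖x‖`, so `‖M - c‖ ≤ (s - i)/2 · √B_φ √B_ψ`,
and the spectrum of `M` lies within `‖M - c‖` of `c`.
-/

open scoped InnerProductSpace

section BesselMultiplier

variable {𝕜 H ι : Type*} [RCLike 𝕜] [NormedAddCommGroup H] [InnerProductSpace 𝕜 H]

variable (𝕜) in
def IsBesselSeq (φ : ι → H) (B : ℝ) : Prop :=
  ∀ f : H, ∃ s : ℝ, HasSum (fun n => ‖⟪φ n, f⟫_𝕜‖ ^ 2) s ∧ s ≤ B * ‖f‖ ^ 2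

theorem IsBesselSeq.exists_hasSum_rpow_two_le {φ : ι → H} {B : ℝ}
    (hφ : IsBesselSeq 𝕜 φ B) (f : H) :
    ∃ A : ℝ, 0 ≤ A ∧ HasSum (fun n => ‖⟪φ n, f⟫_𝕜‖ ^ (2 : ℝ)) (A ^ (2 : ℝ)) ∧
      A ≤ √B * ‖f‖ := by
  obtain ⟨s, hs, hsB⟩ := hφ f
  have hs0 : 0 ≤ s := hs.nonneg fun n => sq_nonneg _
  refine ⟨√s, Real.sqrt_nonneg s, ?_, ?_⟩
  · simpa only [Real.rpow_two, Real.sq_sqrt hs0] using hs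
  · calc √s ≤ √(B * ‖f‖ ^ 2) := Real.sqrt_le_sqrt hsB
      _ = √B * ‖f‖ := by rw [Real.sqrt_mul' _ (sq_nonneg _), Real.sqrt_sq (norm_nonneg _)]

theorem IsBesselSeq.exists_hasSum_norm_inner_mul_le {φ ψ : ι → H} {Bφ Bψ : ℝ}
    (hφ : IsBesselSeq 𝕜 φ Bφ) (hψ : IsBesselSeq 𝕜 ψ Bψ) (f g : H) :
    ∃ C : ℝ, HasSum (fun n => ‖⟪φ n, f⟫_𝕜‖ * ‖⟪ψ n, g⟫_𝕜‖) C ∧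
      C ≤ √Bφ * √Bψ * (‖f‖ * ‖g‖) := by
  obtain ⟨A, hA0, hA, hAB⟩ := hφ.exists_hasSum_rpow_two_le f
  obtain ⟨B, hB0, hB, hBB⟩ := hψ.exists_hasSum_rpow_two_le g
  obtain ⟨C, -, hCAB, hC⟩ :=
    Real.inner_le_Lp_mul_Lq_hasSum_of_nonneg Real.HolderConjugate.two_two hA0 hB0
      (fun n => norm_nonneg _) (fun n => norm_nonneg _) hA hB
  refine ⟨C, hC, hCAB.trans ?_⟩
  calc A * B ≤ (√Bφ * ‖f‖) * (√Bψ * ‖g‖) := mul_le_mul hAB hBB hB0 (by positivity)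
    _ = √Bφ * √Bψ * (‖f‖ * ‖g‖) := by ring

variable {φ ψ : ι → H} {Bφ Bψ : ℝ} {a : ι → 𝕜} {K : ℝ}

theorem IsBesselSeq.norm_le_of_hasSum_multiplier (hφ : IsBesselSeq 𝕜 φ Bφ)
    (hψ : IsBesselSeq 𝕜 ψ Bψ) (hK : 0 ≤ K) (ha : ∀ n, ‖a n‖ ≤ K) {f x : H}
    (hx : HasSum (fun n => (a n * ⟪ψ n, f⟫_𝕜) • φ n) x) :
    ‖x‖ ≤ K * √Bφ * √Bψ * ‖f‖ := by
  have hpair : HasSum (fun n => a n * ⟪ψ n, f⟫_𝕜 * ⟪x, φ n⟫_𝕜) ⟪x, x⟫_𝕜 := by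
    simpa only [innerSL_apply_apply, inner_smul_right, mul_comm] using (innerSL 𝕜 x).hasSum hx
  obtain ⟨C, hC, hCle⟩ := hψ.exists_hasSum_norm_inner_mul_le hφ f x
  have hterm : ∀ n,
      ‖a n * ⟪ψ n, f⟫_𝕜 * ⟪x, φ n⟫_𝕜‖ ≤ K * (‖⟪ψ n, f⟫_𝕜‖ * ‖⟪φ n, x⟫_𝕜‖) := by
    intro n
    rw [norm_mul, norm_mul, norm_inner_symm x, mul_assoc]
    exact mul_le_mul_of_nonneg_right (ha n) (by positivity)
  have hsq : ‖x‖ ^ 2 ≤ K * √Bφ * √Bψ * ‖f‖ * ‖x‖ :=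
    calc ‖x‖ ^ 2 = ‖⟪x, x⟫_𝕜‖ := by
          rw [inner_self_eq_norm_sq_to_K, norm_pow, RCLike.norm_ofReal, abs_norm]
      _ ≤ K * C := by rw [← hpair.tsum_eq]; exact tsum_of_norm_bounded (hC.mul_left K) hterm
      _ ≤ K * (√Bψ * √Bφ * (‖f‖ * ‖x‖)) := mul_le_mul_of_nonneg_left hCle hK
      _ = K * √Bφ * √Bψ * ‖f‖ * ‖x‖ := by ring
  have : 0 ≤ K * √Bφ * √Bψ * ‖f‖ := by positivity
  nlinarith [norm_nonneg x]

theorem IsBesselSeq.opNorm_le_of_hasSum_multiplier (hφ : IsBesselSeq 𝕜 φ Bφ)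
    (hψ : IsBesselSeq 𝕜 ψ Bψ) (hK : 0 ≤ K) (ha : ∀ n, ‖a n‖ ≤ K) (T : H →L[𝕜] H)
    (hT : ∀ f, HasSum (fun n => (a n * ⟪ψ n, f⟫_𝕜) • φ n) (T f)) :
    ‖T‖ ≤ K * √Bφ * √Bψ :=
  T.opNorm_le_bound (by positivity) fun f => hφ.norm_le_of_hasSum_multiplier hψ hK ha (hT f)

theorem hasSum_multiplier_sub_algebraMap
    (hdual : ∀ f : H, HasSum (fun n => ⟪ψ n, f⟫_𝕜 • φ n) f) {M : H →L[𝕜] H}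
    (hM : ∀ f, HasSum (fun n => (a n * ⟪ψ n, f⟫_𝕜) • φ n) (M f)) (c : 𝕜) (f : H) :
    HasSum (fun n => ((a n - c) * ⟪ψ n, f⟫_𝕜) • φ n)
      ((M - algebraMap 𝕜 (H →L[𝕜] H) c) f) := by
  have hc : HasSum (fun n => (c * ⟪ψ n, f⟫_𝕜) • φ n) (c • f) := by
    simpa only [smul_smul] using (hdual f).const_smul c
  simpa only [sub_mul, sub_smul, sub_apply, Algebra.algebraMap_eq_smul_one,
    smul_apply, one_apply_eq_self] using (hM f).sub hc

end BesselMultiplier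

theorem abs_sub_midpoint_iSup_iInf_le {ι : Type*} {m : ι → ℝ} (hA : BddAbove (Set.range m))
    (hB : BddBelow (Set.range m)) (n : ι) :
    |m n - ((⨆ k, m k) + ⨅ k, m k) / 2| ≤ ((⨆ k, m k) - ⨅ k, m k) / 2 := by
  have hs := le_ciSup hA n
  have hi := ciInf_le hB n
  rw [abs_le]
  constructor <;> linarith

theorem spectrum_subset_closedBall_of_norm_sub_algebraMap_le {𝕜 E : Type*}
    [NontriviallyNormedField 𝕜] [NormedAddCommGroup E] [NormedSpace 𝕜 E] [CompleteSpace E]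
    {T : E →L[𝕜] E} {c : 𝕜} {r : ℝ} (hr : ‖T - algebraMap 𝕜 (E →L[𝕜] E) c‖ ≤ r) :
    spectrum 𝕜 T ⊆ Metric.closedBall c r := by
  intro k hk
  have hkc : k - c ∈ spectrum 𝕜 (T - algebraMap 𝕜 (E →L[𝕜] E) c) := by
    rw [← spectrum.sub_singleton_eq]
    exact Set.sub_mem_sub hk rfl
  rw [Metric.mem_closedBall, dist_eq_norm]
  calc ‖k - c‖ ≤ ‖T - algebraMap 𝕜 (E →L[𝕜] E) c‖ * ‖(1 : E →L[𝕜] E)‖ :=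
        spectrum.norm_le_norm_mul_of_mem hkc
    _ ≤ r * 1 :=
        mul_le_mul hr ContinuousLinearMap.norm_id_le (norm_nonneg _) ((norm_nonneg _).trans hr)
    _ = r := mul_one r

theorem spectrum_dual_frames_multiplier_real_symbol_subset_disk_general
    {H : Type*} [NormedAddCommGroup H] [InnerProductSpace ℂ H] [CompleteSpace H]
    (φ ψ : ℕ → H) (Aφ Bφ Aψ Bψ : ℝ)
    (hφ : ∀ f : H, ∃ s : ℝ, HasSum (fun n => ‖⟪φ n, f⟫_ℂ‖ ^ 2) s ∧
      Aφ * ‖f‖ ^ 2 ≤ s ∧ s ≤ Bφ * ‖f‖ ^ 2)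
    (hψ : ∀ f : H, ∃ s : ℝ, HasSum (fun n => ‖⟪ψ n, f⟫_ℂ‖ ^ 2) s ∧
      Aψ * ‖f‖ ^ 2 ≤ s ∧ s ≤ Bψ * ‖f‖ ^ 2)
    (hdual : ∀ f : H, HasSum (fun n => ⟪ψ n, f⟫_ℂ • φ n) f)
    (m : ℕ → ℝ) (hm : ∃ C : ℝ, ∀ n, |m n| ≤ C)
    (s i : ℝ) (hs : s = ⨆ n, m n) (hi : i = ⨅ n, m n)
    (M : H →L[ℂ] H)
    (hM : ∀ f : H, HasSum (fun n => ((m n : ℂ) * ⟪ψ n, f⟫_ℂ) • φ n) (M f)) :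
    spectrum ℂ M ⊆
      Metric.closedBall (((s + i) / 2 : ℝ) : ℂ)
        (((s - i) / 2) * Real.sqrt Bφ * Real.sqrt Bψ) := by
  obtain ⟨C, hC⟩ := hm
  have hsymbol : ∀ n, ‖(m n : ℂ) - ((s + i) / 2 : ℝ)‖ ≤ (s - i) / 2 := fun n => by
    rw [← Complex.ofReal_sub, Complex.norm_real, Real.norm_eq_abs, hs, hi]
    exact abs_sub_midpoint_iSup_iInf_le ⟨C, Set.forall_mem_range.2 fun n => (abs_le.1 (hC n)).2⟩
      ⟨-C, Set.forall_mem_range.2 fun n => (abs_le.1 (hC n)).1⟩ n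
  have hφB : IsBesselSeq ℂ φ Bφ := fun f => (hφ f).imp fun _ h => ⟨h.1, h.2.2⟩
  have hψB : IsBesselSeq ℂ ψ Bψ := fun f => (hψ f).imp fun _ h => ⟨h.1, h.2.2⟩
  exact spectrum_subset_closedBall_of_norm_sub_algebraMap_le <|
    hφB.opNorm_le_of_hasSum_multiplier hψB ((norm_nonneg _).trans (hsymbol 0)) hsymbol _
      (hasSum_multiplier_sub_algebraMap hdual hM _)

/-- for dual frames and a real bounded symbol with `s = sup m`, `i = inf m`,
the spectrum of the multiplier lies in the closed disk centered at `(s+i)/2` of radius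
`((s-i)/2)·Bφ^(1/2)·Bψ^(1/2)`. -/
theorem spectrum_dual_frames_multiplier_real_symbol_subset_disk
    {H : Type*} [NormedAddCommGroup H] [InnerProductSpace ℂ H] [CompleteSpace H]
    (φ ψ : ℕ → H) (Aφ Bφ Aψ Bψ : ℝ) (hAφ : 0 < Aφ) (hAψ : 0 < Aψ)
    (hφ : ∀ f : H, ∃ s : ℝ, HasSum (fun n => ‖⟪φ n, f⟫_ℂ‖ ^ 2) s ∧
      Aφ * ‖f‖ ^ 2 ≤ s ∧ s ≤ Bφ * ‖f‖ ^ 2)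
    (hψ : ∀ f : H, ∃ s : ℝ, HasSum (fun n => ‖⟪ψ n, f⟫_ℂ‖ ^ 2) s ∧
      Aψ * ‖f‖ ^ 2 ≤ s ∧ s ≤ Bψ * ‖f‖ ^ 2)
    (hdual : ∀ f : H, HasSum (fun n => ⟪ψ n, f⟫_ℂ • φ n) f)
    (m : ℕ → ℝ) (hm : ∃ C : ℝ, ∀ n, |m n| ≤ C)
    (s i : ℝ) (hs : s = ⨆ n, m n) (hi : i = ⨅ n, m n)
    (M : H →L[ℂ] H)
    (hM : ∀ f : H, HasSum (fun n => ((m n : ℂ) * ⟪ψ n, f⟫_ℂ) • φ n) (M f)) :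
    spectrum ℂ M ⊆
      Metric.closedBall (((s + i) / 2 : ℝ) : ℂ)
        (((s - i) / 2) * Real.sqrt Bφ * Real.sqrt Bψ) :=
  spectrum_dual_frames_multiplier_real_symbol_subset_disk_general φ ψ Aφ Bφ Aψ Bψ hφ hψ hdual m hm s
    i hs hi M hM
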